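/- arXiv:2508.20956 — 2 statements merged into one kernel-verified Lean document; each statement's English description precedes it below -/
import Mathlib

section
/- If the operator matrix M_C = [[A, C],[0, B]] is Fredholm-left-invertible (injective with finite-codimensional range), then A is left invertible, B is lower semi-Fredholm, and either dim ker(B) ≤ dim coker(A) < ∞ or dim ker(B) = dim coker(A) = ∞. -/
open ContinuousLinearMap Cardinal

noncomputable section

universe u

/-- nullity: dimension of the kernel, as a cardinal -/
def alphaDim {E F : Type u} [NormedAddCommGroup E] [NormedSpace ℂ E]
    [NormedAddCommGroup F] [NormedSpace ℂ F] (T : E →L[ℂ] F) : Cardinal :=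
  Module.rank ℂ (LinearMap.ker (T : E →ₗ[ℂ] F))

/-- deficiency: dimension of the cokernel, as a cardinal -/
def betaDim {E F : Type u} [NormedAddCommGroup E] [NormedSpace ℂ E]
    [NormedAddCommGroup F] [NormedSpace ℂ F] (T : E →L[ℂ] F) : Cardinal :=
  Module.rank ℂ (F ⧸ LinearMap.range (T : E →ₗ[ℂ] F))

/-- the upper triangular operator matrix [[A, C],[0, B]] acting on H ⊕ K -/
def MC {H K : Type u} [NormedAddCommGroup H] [NormedSpace ℂ H]
    [NormedAddCommGroup K] [NormedSpace ℂ K]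
    (A : H →L[ℂ] H) (B : K →L[ℂ] K) (C : K →L[ℂ] H) : (H × K) →L[ℂ] (H × K) :=
  (A.comp (fst ℂ H K) + C.comp (snd ℂ H K)).prod (B.comp (snd ℂ H K))

/-- T - λ -/
def shf {E : Type u} [NormedAddCommGroup E] [NormedSpace ℂ E]
    (T : E →L[ℂ] E) (l : ℂ) : E →L[ℂ] E := T - l • ContinuousLinearMap.id ℂ E

/-- Fredholm left invertible spectrum -/
def sigmaFLI {E : Type u} [NormedAddCommGroup E] [NormedSpace ℂ E]
    (T : E →L[ℂ] E) : Set ℂ :=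
  {l | ¬ (Function.Injective (shf T l) ∧ betaDim (shf T l) < ℵ₀)}

/-- Fredholm right invertible spectrum -/
def sigmaFRI {E : Type u} [NormedAddCommGroup E] [NormedSpace ℂ E]
    (T : E →L[ℂ] E) : Set ℂ :=
  {l | ¬ (Function.Surjective (shf T l) ∧ alphaDim (shf T l) < ℵ₀)}

/-- polynomially convex hull: the set together with the bounded components of its complement -/
def polyHull (S : Set ℂ) : Set ℂ :=
  S ∪ {z | z ∉ S ∧ Bornology.IsBounded (connectedComponentIn Sᶜ z)}

variable {H K : Type u}
  [NormedAddCommGroup H] [InnerProductSpace ℂ H] [CompleteSpace H]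
  [NormedAddCommGroup K] [InnerProductSpace ℂ K] [CompleteSpace K]

/-!
Adding to `M_C` the inclusion of a finite-dimensional algebraic complement of its range gives a
continuous linear bijection of Banach spaces, so by the open mapping theorem the range of `M_C` is
closed and `M_C` is bounded below; restricted to `H × 0` this says that `A` is bounded below.

The dimension estimates are exactness of the snake-lemma sequence of `0 → H → H × K → K → 0`:
`ker B → coker A, y ↦ [C y]` is injective because `M_C` is, the kernel of
`coker A → coker M_C` lies in its image, so `β(A) ≤ β(M_C) + α(B)`, and `coker M_C` maps onto
`coker B`.
-/

namespace LinearMap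

variable {𝕜 : Type*} {M N : Type u} [DivisionRing 𝕜] [AddCommGroup M] [Module 𝕜 M]
  [AddCommGroup N] [Module 𝕜 N] (A : M →ₗ[𝕜] M) (B : N →ₗ[𝕜] N) (C : N →ₗ[𝕜] M)

def upperTriangular : M × N →ₗ[𝕜] M × N :=
  (A.coprod C).prod (B ∘ₗ snd 𝕜 M N)

@[simp]
theorem upperTriangular_apply (z : M × N) :
    upperTriangular A B C z = (A z.1 + C z.2, B z.2) := rfl

/-- The connecting map `ker B → coker A` of the snake lemma for `0 → M → M × N → N → 0`. -/
def upperTriangularConnecting : ker B →ₗ[𝕜] M ⧸ range A :=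
  (range A).mkQ ∘ₗ C ∘ₗ (ker B).subtype

theorem upperTriangularConnecting_injective (hT : Function.Injective (upperTriangular A B C)) :
    Function.Injective (upperTriangularConnecting A B C) := by
  rw [← ker_eq_bot, ker_eq_bot']
  intro y hy
  obtain ⟨x, hx⟩ : C y ∈ range A := (Submodule.Quotient.mk_eq_zero _).mp hy
  have hzero : upperTriangular A B C (-x, y) = upperTriangular A B C 0 := by
    simp [hx, mem_ker.mp y.2]
  exact Subtype.ext (congrArg Prod.snd (hT hzero))

theorem range_le_comap_inl_range_upperTriangular :
    range A ≤ (range (upperTriangular A B C)).comap (inl 𝕜 M N) := by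
  rintro _ ⟨x, rfl⟩
  exact ⟨(x, 0), by simp⟩

theorem ker_mapQ_inl_le_range_upperTriangularConnecting :
    ker ((range A).mapQ _ (inl 𝕜 M N) (range_le_comap_inl_range_upperTriangular A B C)) ≤
      range (upperTriangularConnecting A B C) := by
  intro q hq
  obtain ⟨x, rfl⟩ := Submodule.mkQ_surjective _ q
  obtain ⟨⟨u, v⟩, huv⟩ : (x, (0 : N)) ∈ range (upperTriangular A B C) :=
    (Submodule.Quotient.mk_eq_zero _).mp hq
  simp only [upperTriangular_apply, Prod.mk.injEq] at huv
  refine ⟨⟨v, huv.2⟩, (Submodule.Quotient.eq _).mpr ⟨-u, ?_⟩⟩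
  simp [← huv.1]

theorem rank_quotient_range_le_upperTriangular :
    Module.rank 𝕜 (N ⧸ range B) ≤ Module.rank 𝕜 ((M × N) ⧸ range (upperTriangular A B C)) := by
  have h : range (upperTriangular A B C) ≤ (range B).comap (snd 𝕜 M N) := by
    rintro _ ⟨z, rfl⟩
    exact ⟨z.2, rfl⟩
  refine ((range _).mapQ _ (snd 𝕜 M N) h).rank_le_of_surjective fun q => ?_
  obtain ⟨y, rfl⟩ := Submodule.mkQ_surjective _ q
  exact ⟨Submodule.Quotient.mk (0, y), rfl⟩

theorem rank_ker_le_rank_quotient_range (hT : Function.Injective (upperTriangular A B C)) :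
    Module.rank 𝕜 (ker B) ≤ Module.rank 𝕜 (M ⧸ range A) :=
  (upperTriangularConnecting A B C).rank_le_of_injective
    (upperTriangularConnecting_injective A B C hT)

theorem rank_quotient_range_le_add_rank_ker :
    Module.rank 𝕜 (M ⧸ range A) ≤
      Module.rank 𝕜 ((M × N) ⧸ range (upperTriangular A B C)) + Module.rank 𝕜 (ker B) := by
  set ψ := (range A).mapQ _ (inl 𝕜 M N) (range_le_comap_inl_range_upperTriangular A B C)
  calc Module.rank 𝕜 (M ⧸ range A)
      = Module.rank 𝕜 (range ψ) + Module.rank 𝕜 (ker ψ) := ψ.rank_range_add_rank_ker.symm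
    _ ≤ Module.rank 𝕜 ((M × N) ⧸ range (upperTriangular A B C)) +
          Module.rank 𝕜 (range (upperTriangularConnecting A B C)) :=
        add_le_add (Submodule.rank_le _)
          (Submodule.rank_mono (ker_mapQ_inl_le_range_upperTriangularConnecting A B C))
    _ ≤ _ := add_le_add le_rfl (rank_range_le _)

end LinearMap

theorem MC_toLinearMap {E F : Type u} [NormedAddCommGroup E] [NormedSpace ℂ E]
    [NormedAddCommGroup F] [NormedSpace ℂ F] (A : E →L[ℂ] E) (B : F →L[ℂ] F) (C : F →L[ℂ] E) :
    (MC A B C : E × F →ₗ[ℂ] E × F) = LinearMap.upperTriangular A B C := rfl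

theorem AntilipschitzWith.of_MC {E F : Type u} [NormedAddCommGroup E] [NormedSpace ℂ E]
    [NormedAddCommGroup F] [NormedSpace ℂ F] {A : E →L[ℂ] E} {B : F →L[ℂ] F} {C : F →L[ℂ] E}
    {c : NNReal} (h : AntilipschitzWith c (MC A B C)) : AntilipschitzWith c A := fun x y => by
  simpa [MC, Prod.edist_eq] using h (x, 0) (y, 0)

namespace ContinuousLinearMap

variable {𝕜 E F : Type*} [NontriviallyNormedField 𝕜] [NormedAddCommGroup E] [NormedSpace 𝕜 E]
  [CompleteSpace E] [NormedAddCommGroup F] [NormedSpace 𝕜 F] [CompleteSpace F]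

theorem isClosed_range_of_injective_of_finiteDimensional_quotient [CompleteSpace 𝕜]
    (T : E →L[𝕜] F) (hT : Function.Injective T)
    [FiniteDimensional 𝕜 (F ⧸ LinearMap.range (T : E →ₗ[𝕜] F))] :
    IsClosed (Set.range T) := by
  obtain ⟨G, hG⟩ := Submodule.exists_isCompl (LinearMap.range (T : E →ₗ[𝕜] F))
  have : FiniteDimensional 𝕜 G := .of_fg <| Submodule.CoFG.fg_of_isCompl hG inferInstance
  have : CompleteSpace G := FiniteDimensional.complete 𝕜 G
  have hΦ : Function.Bijective (T.coprod G.subtypeL) := by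
    convert (((LinearEquiv.ofInjective _ hT).prodCongr (LinearEquiv.refl 𝕜 G)).trans
      (Submodule.prodEquivOfIsCompl _ _ hG)).bijective
    ext ⟨x, g⟩
    rfl
  let e := ContinuousLinearEquiv.ofBijective (T.coprod G.subtypeL)
    (LinearMap.ker_eq_bot.mpr hΦ.1) (LinearMap.range_eq_top.mpr hΦ.2)
  have hrange : Set.range T = e.symm ⁻¹' {p | p.2 = 0} := by
    ext y
    constructor
    · rintro ⟨x, rfl⟩
      have hx : e.symm (T x) = (x, 0) := e.symm_apply_eq.mpr (by simp [e])
      simp [hx]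
    · intro hy
      have hy' : e.symm y = ((e.symm y).1, 0) := Prod.ext rfl hy
      refine ⟨(e.symm y).1, ?_⟩
      calc T (e.symm y).1 = e ((e.symm y).1, 0) := by simp [e]
        _ = y := by rw [← hy', e.apply_symm_apply]
  rw [hrange]
  exact (isClosed_eq continuous_snd continuous_const).preimage e.symm.continuous

end ContinuousLinearMap

theorem stmt_9_general
    (A : H →L[ℂ] H) (B : K →L[ℂ] K) (C : K →L[ℂ] H)
    (h : Function.Injective (MC A B C) ∧ betaDim (MC A B C) < ℵ₀) :
    (Function.Injective A ∧ IsClosed (Set.range A)) ∧ betaDim B < ℵ₀ ∧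
      ((alphaDim B ≤ betaDim A ∧ betaDim A < ℵ₀) ∨ (ℵ₀ ≤ alphaDim B ∧ ℵ₀ ≤ betaDim A)) := by
  obtain ⟨hinj, hβ⟩ := h
  have : FiniteDimensional ℂ ((H × K) ⧸ LinearMap.range (MC A B C : H × K →ₗ[ℂ] H × K)) :=
    Module.rank_lt_aleph0_iff.mp hβ
  obtain ⟨c, hc⟩ := (MC A B C).antilipschitz_of_injective_of_isClosed_range hinj
    ((MC A B C).isClosed_range_of_injective_of_finiteDimensional_quotient hinj)
  have hA := hc.of_MC
  rw [← coe_coe, MC_toLinearMap] at hinj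
  simp only [betaDim, alphaDim, MC_toLinearMap] at hβ ⊢
  have hαβ := LinearMap.rank_ker_le_rank_quotient_range _ _ _ hinj
  have hβA := LinearMap.rank_quotient_range_le_add_rank_ker (A : H →ₗ[ℂ] H) (B : K →ₗ[ℂ] K) C
  refine ⟨⟨hA.injective, hA.isClosed_range A.uniformContinuous⟩,
    (LinearMap.rank_quotient_range_le_upperTriangular _ _ (C : K →ₗ[ℂ] H)).trans_lt hβ, ?_⟩
  rcases lt_or_ge (Module.rank ℂ (H ⧸ LinearMap.range (A : H →ₗ[ℂ] H))) ℵ₀ with hfin | hinf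
  · exact Or.inl ⟨hαβ, hfin⟩
  · refine Or.inr ⟨?_, hinf⟩
    by_contra! hα
    exact (hβA.trans_lt (add_lt_aleph0 hβ hα)).not_ge hinf

theorem stmt_9
  [TopologicalSpace.SeparableSpace H] [TopologicalSpace.SeparableSpace K]
    (hH : ¬ FiniteDimensional ℂ H) (hK : ¬ FiniteDimensional ℂ K)
    (A : H →L[ℂ] H) (B : K →L[ℂ] K) (C : K →L[ℂ] H)
    (h : Function.Injective (MC A B C) ∧ betaDim (MC A B C) < ℵ₀) :
    (Function.Injective A ∧ IsClosed (Set.range A)) ∧ betaDim B < ℵ₀ ∧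
      ((alphaDim B ≤ betaDim A ∧ betaDim A < ℵ₀) ∨ (ℵ₀ ≤ alphaDim B ∧ ℵ₀ ≤ betaDim A)) :=
  stmt_9_general A B C h
end
end

section
/- There exists a bounded operator C : K → H such that the operator matrix M_C = [[A, C],[0, B]] is Fredholm left invertible (injective with finite-codimensional range) if and only if A is left invertible, B is lower semi-Fredholm, and either dim ker(B) ≤ dim coker(A) < ∞ or dim ker(B) = dim coker(A) = ∞. -/
open ContinuousLinearMap Cardinal

noncomputable section

universe u

/-!
An operator between Banach spaces whose range has finite codimension has closed range, so an
injective such `M_C` is bounded below, and then so is `A`, since `M_C (x, 0) = (A x, 0)`.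
The cokernel of `B` is a quotient of that of `M_C`, and `y ↦ [C y]` embeds `ker B` into `coker A`. Moreover
`(u, 0)` lies in the range of `M_C` exactly when `u ∈ range A + C (ker B)`, so `coker A` is at most
`coker M_C` plus the image of `ker B`: an infinite-dimensional `coker A` forces an
infinite-dimensional `ker B`.

Conversely, pick an injective bounded `J : ker B → (range A)ᗮ` that is onto unless `(range A)ᗮ` is
finite-dimensional (in the infinite case, two separable infinite-dimensional Hilbert spaces are
isometric), and put `C = J ∘ P_{ker B}`. Orthogonality of `range A` and `range C` makes `M_C`
injective, and its range contains `(range A + range C) × range B`, of finite codimension.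
-/

universe w

section ClosedRange

variable {𝕜 E F : Type*} [NontriviallyNormedField 𝕜] [CompleteSpace 𝕜]
  [NormedAddCommGroup E] [NormedSpace 𝕜 E] [CompleteSpace E]
  [NormedAddCommGroup F] [NormedSpace 𝕜 F] [CompleteSpace F]

theorem ContinuousLinearMap.isClosed_range_of_finiteDimensional_quotient (T : E →L[𝕜] F)
    [FiniteDimensional 𝕜 (F ⧸ LinearMap.range (T : E →ₗ[𝕜] F))] :
    IsClosed (LinearMap.range (T : E →ₗ[𝕜] F) : Set F) := by
  obtain ⟨Q, hQ⟩ := Submodule.exists_isCompl (LinearMap.range (T : E →ₗ[𝕜] F))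
  have : FiniteDimensional 𝕜 Q := (Submodule.quotientEquivOfIsCompl _ Q hQ).finiteDimensional
  have : CompleteSpace Q := FiniteDimensional.complete 𝕜 Q
  set S : E × Q →L[𝕜] F := T.coprod Q.subtypeL
  have hS : Function.Surjective S := by
    have : LinearMap.range (S : E × Q →ₗ[𝕜] F) = ⊤ := by
      rw [ContinuousLinearMap.coe_coprod, LinearMap.range_coprod, Submodule.toLinearMap_subtypeL,
        Submodule.range_subtype, hQ.sup_eq_top]
    exact LinearMap.range_eq_top.mp this
  have hpre : S ⁻¹' LinearMap.range (T : E →ₗ[𝕜] F) = {p | p.2 = 0} := by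
    ext ⟨x, q⟩
    simp only [Set.mem_preimage, SetLike.mem_coe, Set.mem_ofPred_eq, S,
      ContinuousLinearMap.coprod_apply, Submodule.subtypeL_apply]
    have hx : T x ∈ LinearMap.range (T : E →ₗ[𝕜] F) := ⟨x, rfl⟩
    rw [Submodule.add_mem_iff_right _ hx, ← Submodule.coe_eq_zero]
    exact ⟨fun h => hQ.disjoint.le_bot ⟨h, q.2⟩, fun h => h ▸ zero_mem _⟩
  rw [← ((S.isOpenMap hS).isQuotientMap S.continuous hS).isClosed_preimage, hpre]
  exact isClosed_eq continuous_snd continuous_const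

end ClosedRange

section RankQuotient

variable {R : Type*} {V W : Type w} [Ring R] [AddCommGroup V] [Module R V]
  [AddCommGroup W] [Module R W]

theorem rank_le_rank_quotient_of_surjective {f : V →ₗ[R] W} (hf : Function.Surjective f)
    {p : Submodule R V} (hp : p ≤ LinearMap.ker f) : Module.rank R W ≤ Module.rank R (V ⧸ p) :=
  LinearMap.rank_le_of_surjective (p.liftQ f hp) <| LinearMap.range_eq_top.mp <| by
    rw [Submodule.range_liftQ, LinearMap.range_eq_top.mpr hf]

theorem rank_quotient_le_of_surjective {f : V →ₗ[R] W} (hf : Function.Surjective f)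
    {p : Submodule R V} (hp : LinearMap.ker f ≤ p) : Module.rank R (V ⧸ p) ≤ Module.rank R W :=
  (LinearMap.rank_le_of_surjective _ (Submodule.factor_surjective hp)).trans_eq
    (f.quotKerEquivOfSurjective hf).rank_eq

theorem rank_quotient_ker_le (f : V →ₗ[R] W) :
    Module.rank R (V ⧸ LinearMap.ker f) ≤ Module.rank R W :=
  f.quotKerEquivRange.rank_eq.trans_le (Submodule.rank_le _)

theorem rank_quotient_le_rank_quotient_sup_add_rank {K : Type*} [DivisionRing K] [Module K V]
    (p q : Submodule K V) :
    Module.rank K (V ⧸ p) ≤ Module.rank K (V ⧸ (p ⊔ q)) + Module.rank K q := by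
  rw [← rank_quotient_add_rank_of_divisionRing ((p ⊔ q).map p.mkQ),
    (Submodule.quotientQuotientEquivQuotient p (p ⊔ q) le_sup_left).rank_eq, Submodule.map_sup,
    Submodule.mkQ_map_self, bot_sup_eq]
  gcongr
  exact rank_map_le _ _

end RankQuotient

section OperatorMatrix

variable {H K : Type u} [NormedAddCommGroup H] [NormedSpace ℂ H]
  [NormedAddCommGroup K] [NormedSpace ℂ K] {A : H →L[ℂ] H} {B : K →L[ℂ] K} {C : K →L[ℂ] H}

@[simp]
theorem MC_apply (A : H →L[ℂ] H) (B : K →L[ℂ] K) (C : K →L[ℂ] H) (x : H) (y : K) :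
    MC A B C (x, y) = (A x + C y, B y) := rfl

theorem comap_inl_range_MC :
    (LinearMap.range (MC A B C : H × K →ₗ[ℂ] H × K)).comap (LinearMap.inl ℂ H K) =
      LinearMap.range (A : H →ₗ[ℂ] H) ⊔ (LinearMap.ker (B : K →ₗ[ℂ] K)).map (C : K →ₗ[ℂ] H) := by
  ext u
  simp only [Submodule.mem_comap, LinearMap.inl_apply, LinearMap.mem_range, Submodule.mem_sup,
    Submodule.mem_map, LinearMap.mem_ker, ContinuousLinearMap.coe_coe, Prod.exists, MC_apply,
    Prod.mk.injEq]
  constructor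
  · rintro ⟨x, y, rfl, hy⟩
    exact ⟨_, ⟨x, rfl⟩, _, ⟨y, hy, rfl⟩, rfl⟩
  · rintro ⟨_, ⟨x, rfl⟩, _, ⟨y, hy, rfl⟩, rfl⟩
    exact ⟨x, y, rfl, hy⟩

theorem injective_of_injective_MC (h : Function.Injective (MC A B C)) : Function.Injective A :=
  fun x x' hx => congrArg Prod.fst (h (show MC A B C (x, 0) = MC A B C (x', 0) by simp [hx]))

theorem alphaDim_le_betaDim_of_injective_MC (h : Function.Injective (MC A B C)) :
    alphaDim B ≤ betaDim A := by
  refine LinearMap.rank_le_of_injective ((LinearMap.range (A : H →ₗ[ℂ] H)).mkQ ∘ₗ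
    (C : K →ₗ[ℂ] H) ∘ₗ (LinearMap.ker (B : K →ₗ[ℂ] K)).subtype) ?_
  rw [← LinearMap.ker_eq_bot, LinearMap.ker_eq_bot']
  rintro ⟨y, hy⟩ hCy
  obtain ⟨x, hx⟩ : C y ∈ LinearMap.range (A : H →ₗ[ℂ] H) := (Submodule.Quotient.mk_eq_zero _).mp hCy
  have hBy : B y = 0 := hy
  have := h (show MC A B C (-x, y) = MC A B C 0 by simp [← hx, hBy])
  simpa using congrArg Prod.snd this

theorem betaDim_le_betaDim_MC : betaDim B ≤ betaDim (MC A B C) := by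
  refine rank_le_rank_quotient_of_surjective (f := (LinearMap.range (B : K →ₗ[ℂ] K)).mkQ ∘ₗ
    LinearMap.snd ℂ H K) ((Submodule.mkQ_surjective _).comp LinearMap.snd_surjective) ?_
  rintro _ ⟨⟨x, y⟩, rfl⟩
  simp [Submodule.Quotient.mk_eq_zero]

theorem betaDim_le_betaDim_MC_add_alphaDim : betaDim A ≤ betaDim (MC A B C) + alphaDim B := by
  have hker : LinearMap.ker ((LinearMap.range (MC A B C : H × K →ₗ[ℂ] H × K)).mkQ ∘ₗ
      LinearMap.inl ℂ H K) =
      LinearMap.range (A : H →ₗ[ℂ] H) ⊔ (LinearMap.ker (B : K →ₗ[ℂ] K)).map (C : K →ₗ[ℂ] H) := by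
    rw [LinearMap.ker_comp, Submodule.ker_mkQ, comap_inl_range_MC]
  calc betaDim A
      ≤ Module.rank ℂ (H ⧸ (LinearMap.range (A : H →ₗ[ℂ] H) ⊔
          (LinearMap.ker (B : K →ₗ[ℂ] K)).map (C : K →ₗ[ℂ] H))) +
        Module.rank ℂ ((LinearMap.ker (B : K →ₗ[ℂ] K)).map (C : K →ₗ[ℂ] H)) :=
        rank_quotient_le_rank_quotient_sup_add_rank _ _
    _ ≤ betaDim (MC A B C) + alphaDim B := by
        gcongr
        · exact hker ▸ rank_quotient_ker_le _
        · exact rank_map_le _ _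

theorem isClosed_range_of_injective_MC [CompleteSpace H] [CompleteSpace K]
    (h : Function.Injective (MC A B C)) (hβ : betaDim (MC A B C) < ℵ₀) :
    IsClosed (Set.range A) := by
  have : FiniteDimensional ℂ ((H × K) ⧸ LinearMap.range (MC A B C : H × K →ₗ[ℂ] H × K)) :=
    Module.rank_lt_aleph0_iff.mp hβ
  obtain ⟨c, hc⟩ := (MC A B C).antilipschitz_of_injective_of_isClosed_range h
    (MC A B C).isClosed_range_of_finiteDimensional_quotient
  refine (AddMonoidHomClass.antilipschitz_of_bound A (K := c) fun x => ?_).isClosed_range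
    A.uniformContinuous
  simpa [Prod.norm_def] using hc.le_mul_dist (x, 0) 0

theorem injective_MC (hA : Function.Injective A)
    (hAC : Disjoint (LinearMap.range (A : H →ₗ[ℂ] H)) (LinearMap.range (C : K →ₗ[ℂ] H)))
    (hBC : Disjoint (LinearMap.ker (B : K →ₗ[ℂ] K)) (LinearMap.ker (C : K →ₗ[ℂ] H))) :
    Function.Injective (MC A B C) := by
  refine (injective_iff_map_eq_zero _).mpr fun ⟨x, y⟩ hxy => ?_
  simp only [MC_apply, Prod.mk_eq_zero] at hxy
  obtain ⟨hsum, hy⟩ := hxy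
  have hAx : A x = 0 := Submodule.disjoint_def.mp hAC _ ⟨x, rfl⟩
    (by rw [eq_neg_of_add_eq_zero_left hsum]; exact neg_mem ⟨y, rfl⟩)
  have hCy : C y = 0 := by simpa [hAx] using hsum
  simp [hA (hAx.trans (map_zero A).symm), Submodule.disjoint_def.mp hBC y hy hCy]

theorem prod_le_range_MC
    (hC : LinearMap.range (C : K →ₗ[ℂ] H) ≤ (LinearMap.ker (B : K →ₗ[ℂ] K)).map (C : K →ₗ[ℂ] H)) :
    (LinearMap.range (A : H →ₗ[ℂ] H) ⊔ LinearMap.range (C : K →ₗ[ℂ] H)).prod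
      (LinearMap.range (B : K →ₗ[ℂ] K)) ≤ LinearMap.range (MC A B C : H × K →ₗ[ℂ] H × K) := by
  rintro ⟨u, _⟩ ⟨hu, y, rfl⟩
  have hCy : C y ∈ LinearMap.range (A : H →ₗ[ℂ] H) ⊔
      (LinearMap.ker (B : K →ₗ[ℂ] K)).map (C : K →ₗ[ℂ] H) := Submodule.mem_sup_right (hC ⟨y, rfl⟩)
  have hu' : u - C y ∈ (LinearMap.range (MC A B C : H × K →ₗ[ℂ] H × K)).comap
      (LinearMap.inl ℂ H K) := by
    rw [comap_inl_range_MC]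
    exact sub_mem (sup_le_sup_left hC _ hu) hCy
  convert add_mem (Submodule.mem_comap.mp hu')
    (LinearMap.mem_range_self (MC A B C : H × K →ₗ[ℂ] H × K) (0, y)) using 1
  simp

theorem betaDim_MC_le
    (hC : LinearMap.range (C : K →ₗ[ℂ] H) ≤ (LinearMap.ker (B : K →ₗ[ℂ] K)).map (C : K →ₗ[ℂ] H)) :
    betaDim (MC A B C) ≤
      Module.rank ℂ (H ⧸ (LinearMap.range (A : H →ₗ[ℂ] H) ⊔ LinearMap.range (C : K →ₗ[ℂ] H))) +
        betaDim B := by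
  set L := LinearMap.range (A : H →ₗ[ℂ] H) ⊔ LinearMap.range (C : K →ₗ[ℂ] H)
  have hf : Function.Surjective (L.mkQ.prodMap (LinearMap.range (B : K →ₗ[ℂ] K)).mkQ) := by
    rw [LinearMap.coe_prodMap]
    exact L.mkQ_surjective.prodMap (Submodule.mkQ_surjective _)
  refine (rank_quotient_le_of_surjective hf ?_).trans_eq rank_prod'
  rw [LinearMap.ker_prodMap, Submodule.ker_mkQ, Submodule.ker_mkQ]
  exact prod_le_range_MC hC

end OperatorMatrix

section SeparableHilbert

variable {𝕜 E : Type*} [RCLike 𝕜] [NormedAddCommGroup E] [InnerProductSpace 𝕜 E]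

open scoped lp

theorem Orthonormal.countable [TopologicalSpace.SeparableSpace E] {ι : Type*} {v : ι → E}
    (hv : Orthonormal 𝕜 v) : Countable ι := by
  refine Pairwise.countable_of_isOpen_disjoint (s := fun i => Metric.ball (v i) (1 / 2))
    (fun i j hij => Metric.ball_disjoint_ball ?_) (fun _ => Metric.isOpen_ball)
    (fun i => ⟨v i, Metric.mem_ball_self (by norm_num)⟩)
  have hdist : ‖v i - v j‖ ^ 2 = 2 := by
    rw [@norm_sub_sq 𝕜, hv.inner_eq_zero hij, hv.norm_eq_one, hv.norm_eq_one]
    norm_num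
  rw [dist_eq_norm]
  nlinarith [norm_nonneg (v i - v j)]

theorem HilbertBasis.finiteDimensional {ι : Type*} [Finite ι] (b : HilbertBasis ι 𝕜 E) :
    FiniteDimensional 𝕜 E :=
  have := Fintype.ofFinite ι
  .of_basis b.toOrthonormalBasis.toBasis

theorem nonempty_linearIsometryEquiv_lp_nat [CompleteSpace E] [TopologicalSpace.SeparableSpace E]
    (hE : ¬ FiniteDimensional 𝕜 E) : Nonempty (E ≃ₗᵢ[𝕜] ℓ²(ℕ, 𝕜)) := by
  obtain ⟨w, b, -⟩ := exists_hilbertBasis 𝕜 E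
  have : Countable w := b.orthonormal.countable
  have : Infinite w := not_finite_iff_infinite.mp fun _ => hE b.finiteDimensional
  obtain ⟨_⟩ := nonempty_denumerable w
  let e : ℕ ≃ w := (Denumerable.eqv w).symm
  refine ⟨(HilbertBasis.mk (b.orthonormal.comp e e.injective) ?_).repr⟩
  rw [e.surjective.range_comp]
  exact b.dense_span.ge

theorem nonempty_linearIsometryEquiv_of_separable {E' : Type*} [NormedAddCommGroup E']
    [InnerProductSpace 𝕜 E'] [CompleteSpace E] [CompleteSpace E']
    [TopologicalSpace.SeparableSpace E] [TopologicalSpace.SeparableSpace E']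
    (hE : ¬ FiniteDimensional 𝕜 E) (hE' : ¬ FiniteDimensional 𝕜 E') :
    Nonempty (E ≃ₗᵢ[𝕜] E') :=
  let ⟨e⟩ := nonempty_linearIsometryEquiv_lp_nat hE
  let ⟨e'⟩ := nonempty_linearIsometryEquiv_lp_nat hE'
  ⟨e.trans e'.symm⟩

theorem exists_injective_continuousLinearMap_of_rank {X Y : Type u} [NormedAddCommGroup X]
    [InnerProductSpace 𝕜 X] [CompleteSpace X] [TopologicalSpace.SeparableSpace X]
    [NormedAddCommGroup Y] [InnerProductSpace 𝕜 Y] [CompleteSpace Y]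
    [TopologicalSpace.SeparableSpace Y]
    (h : (Module.rank 𝕜 X ≤ Module.rank 𝕜 Y ∧ Module.rank 𝕜 Y < ℵ₀) ∨
      (ℵ₀ ≤ Module.rank 𝕜 X ∧ ℵ₀ ≤ Module.rank 𝕜 Y)) :
    ∃ J : X →L[𝕜] Y, Function.Injective J ∧ (Function.Surjective J ∨ FiniteDimensional 𝕜 Y) := by
  rcases h with ⟨hle, hY⟩ | ⟨hX, hY⟩
  · have : FiniteDimensional 𝕜 X := Module.rank_lt_aleph0_iff.mp (hle.trans_lt hY)
    obtain ⟨f, hf⟩ := rank_le_iff_exists_linearMap.mp hle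
    exact ⟨LinearMap.toContinuousLinearMap f, hf, .inr (Module.rank_lt_aleph0_iff.mp hY)⟩
  · rw [← not_lt, Module.rank_lt_aleph0_iff] at hX hY
    obtain ⟨e⟩ := nonempty_linearIsometryEquiv_of_separable hX hY
    exact ⟨e.toContinuousLinearEquiv.toContinuousLinearMap, e.injective, .inl e.surjective⟩

end SeparableHilbert

variable {H K : Type u}
  [NormedAddCommGroup H] [InnerProductSpace ℂ H] [CompleteSpace H]
  [NormedAddCommGroup K] [InnerProductSpace ℂ K] [CompleteSpace K]

theorem exists_injective_MC_betaDim_lt [TopologicalSpace.SeparableSpace H]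
    [TopologicalSpace.SeparableSpace K] {A : H →L[ℂ] H} {B : K →L[ℂ] K}
    (hA : Function.Injective A) (hAcl : IsClosed (Set.range A)) (hB : betaDim B < ℵ₀)
    (hdim : (alphaDim B ≤ betaDim A ∧ betaDim A < ℵ₀) ∨ (ℵ₀ ≤ alphaDim B ∧ ℵ₀ ≤ betaDim A)) :
    ∃ C : K →L[ℂ] H, Function.Injective (MC A B C) ∧ betaDim (MC A B C) < ℵ₀ := by
  set R := LinearMap.range (A : H →ₗ[ℂ] H)
  set N := LinearMap.ker (B : K →ₗ[ℂ] K)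
  have : CompleteSpace R := (show IsClosed (R : Set H) from hAcl).completeSpace_coe
  have hRperp : betaDim A = Module.rank ℂ Rᗮ :=
    (Submodule.quotientEquivOfIsCompl R Rᗮ R.isCompl_orthogonal).rank_eq
  obtain ⟨J, hJinj, hJ⟩ := exists_injective_continuousLinearMap_of_rank (X := N) (Y := Rᗮ)
    (by rwa [← hRperp])
  set C : K →L[ℂ] H := Rᗮ.subtypeL ∘L J ∘L N.orthogonalProjectionOnto
  have hCN (n : N) : C n = J n := by simp [C]
  have hC : LinearMap.range (C : K →ₗ[ℂ] H) ≤ N.map (C : K →ₗ[ℂ] H) := by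
    rintro _ ⟨y, rfl⟩
    exact ⟨_, (N.orthogonalProjectionOnto y).2, hCN _⟩
  have hCR : LinearMap.range (C : K →ₗ[ℂ] H) ≤ Rᗮ := by
    rintro _ ⟨y, rfl⟩
    exact (J _).2
  have hBC : Disjoint N (LinearMap.ker (C : K →ₗ[ℂ] H)) := by
    refine Submodule.disjoint_def.mpr fun y hy hCy => ?_
    have : J ⟨y, hy⟩ = J 0 := by ext; simpa [← hCN] using hCy
    simpa using congrArg Subtype.val (hJinj this)
  have hfin : Module.rank ℂ (H ⧸ (R ⊔ LinearMap.range (C : K →ₗ[ℂ] H))) < ℵ₀ := by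
    rcases hJ with hJsurj | hfd
    · have hRC : R ⊔ LinearMap.range (C : K →ₗ[ℂ] H) = ⊤ := by
        rw [eq_top_iff, ← Submodule.sup_orthogonal_of_hasOrthogonalProjection (K := R)]
        refine sup_le_sup_left (fun g hg => ?_) R
        obtain ⟨n, hn⟩ := hJsurj ⟨g, hg⟩
        exact ⟨n, by simp [hCN, hn]⟩
      have : Subsingleton (H ⧸ (R ⊔ LinearMap.range (C : K →ₗ[ℂ] H))) :=
        Submodule.Quotient.subsingleton_iff.mpr hRC
      simp [aleph0_pos]
    · calc Module.rank ℂ (H ⧸ (R ⊔ LinearMap.range (C : K →ₗ[ℂ] H)))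
          ≤ betaDim A := LinearMap.rank_le_of_surjective _ (Submodule.factor_surjective le_sup_left)
        _ < ℵ₀ := hRperp ▸ Module.rank_lt_aleph0_iff.mpr hfd
  exact ⟨C, injective_MC hA (R.orthogonal_disjoint.mono_right hCR) hBC,
    (betaDim_MC_le hC).trans_lt (add_lt_aleph0 hfin hB)⟩

theorem stmt_11_general
  [TopologicalSpace.SeparableSpace H] [TopologicalSpace.SeparableSpace K]
    (A : H →L[ℂ] H) (B : K →L[ℂ] K) :
    (∃ C : K →L[ℂ] H, Function.Injective (MC A B C) ∧ betaDim (MC A B C) < ℵ₀) ↔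
      (Function.Injective A ∧ IsClosed (Set.range A)) ∧ betaDim B < ℵ₀ ∧
        ((alphaDim B ≤ betaDim A ∧ betaDim A < ℵ₀) ∨ (ℵ₀ ≤ alphaDim B ∧ ℵ₀ ≤ betaDim A)) := by
  constructor
  · rintro ⟨C, hinj, hβ⟩
    refine ⟨⟨injective_of_injective_MC hinj, isClosed_range_of_injective_MC hinj hβ⟩,
      betaDim_le_betaDim_MC.trans_lt hβ, ?_⟩
    by_cases hA : betaDim A < ℵ₀
    · exact .inl ⟨alphaDim_le_betaDim_of_injective_MC hinj, hA⟩
    · refine .inr ⟨not_lt.mp fun hα => hA ?_, not_lt.mp hA⟩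
      exact betaDim_le_betaDim_MC_add_alphaDim.trans_lt (add_lt_aleph0 hβ hα)
  · rintro ⟨⟨hA, hAcl⟩, hB, hdim⟩
    exact exists_injective_MC_betaDim_lt hA hAcl hB hdim

theorem stmt_11
  [TopologicalSpace.SeparableSpace H] [TopologicalSpace.SeparableSpace K]
    (hH : ¬ FiniteDimensional ℂ H) (hK : ¬ FiniteDimensional ℂ K)
    (A : H →L[ℂ] H) (B : K →L[ℂ] K) :
    (∃ C : K →L[ℂ] H, Function.Injective (MC A B C) ∧ betaDim (MC A B C) < ℵ₀) ↔
      (Function.Injective A ∧ IsClosed (Set.range A)) ∧ betaDim B < ℵ₀ ∧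
        ((alphaDim B ≤ betaDim A ∧ betaDim A < ℵ₀) ∨ (ℵ₀ ≤ alphaDim B ∧ ℵ₀ ≤ betaDim A)) :=
  stmt_11_general A B
end
end
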